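/- arXiv:2202.04377 — 7 statements merged into one kernel-verified Lean document; each statement's English description precedes it below -/
import Mathlib

section
/- Let Σ be a type, let k and m be positive integers, let δ ∈ (0,1) and ε > 0 be real numbers, and let 𝒞 be a finite set of vectors Fin m → Σ such that any two distinct elements of 𝒞 agree in at most (1−δ)·m coordinates. Consider the bipartite graph with left part A = Fin k × 𝒞 and right parts B_j = {j} × (Fin k → Σ) for j ∈ Fin m, where a left vertex (i, x) is adjacent to a right vertex (j, b) if and only if x(j) = b(i). Then for every X ⊆ Fin k × 𝒞 and every choice of right vertices b : Fin m → (Fin k → Σ) (one from each B_j), if the number of indices j ∈ Fin m such that |{(i, x) ∈ X : x(j) = (b j)(i)}| ≥ k + 1 is at least ε·m, then |X| > √(2ε/(1−δ)). -/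
/-! If `(j, b j)` has more than `k` neighbours in `X`, two of them lie in the same copy `i`, so
their codewords are distinct and both agree with `b j i` at `j`: together with its reversal this
gives two ordered collisions at `j`. The `εm` heavy indices thus yield at least `2εm` collisions,
while each of the `|X|(|X|-1)` ordered pairs of distinct elements of `X` collides in at most
`(1-δ)m` coordinates. Hence `2ε ≤ |X|(|X|-1)(1-δ) < |X|²(1-δ)`. -/

open Finset

theorem exists_fst_eq_snd_ne_of_card_lt {ι γ : Type*} [Fintype ι] {s : Finset (ι × γ)}
    (h : Fintype.card ι < #s) : ∃ p ∈ s, ∃ q ∈ s, p.1 = q.1 ∧ p.2 ≠ q.2 := by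
  obtain ⟨p, hp, q, hq, hpq, hfst⟩ :=
    exists_ne_map_eq_of_card_lt_of_maps_to (t := univ) h fun p _ => mem_coe.2 (mem_univ p.1)
  exact ⟨p, hp, q, hq, hfst, fun hsnd => hpq (Prod.ext hfst hsnd)⟩

section Collisions

variable {ι κ β : Type*} [DecidableEq β] [Fintype κ]

def collisions (X : Finset (ι × (κ → β))) (j : κ) : Finset ((ι × (κ → β)) × (ι × (κ → β))) :=
  X.offDiag.filter fun pq => pq.1.2 ≠ pq.2.2 ∧ pq.1.2 j = pq.2.2 j

theorem two_le_card_collisions [Fintype ι] [DecidableEq ι] {X : Finset (ι × (κ → β))} {j : κ}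
    {c : ι → β} (h : Fintype.card ι < #(X.filter fun p => p.2 j = c p.1)) :
    2 ≤ #(collisions X j) := by
  obtain ⟨p, hp, q, hq, hfst, hsnd⟩ := exists_fst_eq_snd_ne_of_card_lt h
  rw [mem_filter] at hp hq
  have hpq : p ≠ q := fun h => hsnd (congrArg Prod.snd h)
  have hagree : p.2 j = q.2 j := by rw [hp.2, hq.2, hfst]
  calc 2 = #{(p, q), (q, p)} := (card_pair fun h => hpq (congrArg Prod.fst h)).symm
    _ ≤ #(collisions X j) := by
      refine card_le_card fun pq hpq' => ?_
      simp only [mem_insert, mem_singleton] at hpq'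
      rcases hpq' with rfl | rfl <;>
        simp [collisions, hp.1, hq.1, hpq, hpq.symm, hsnd, hsnd.symm, hagree]

theorem two_mul_card_filter_lt_le_sum_card_collisions [Fintype ι] [DecidableEq ι]
    (X : Finset (ι × (κ → β))) (c : κ → ι → β) :
    2 * #(univ.filter fun j => Fintype.card ι < #(X.filter fun p => p.2 j = c j p.1)) ≤
      ∑ j, #(collisions X j) := by
  rw [mul_comm, ← smul_eq_mul, ← sum_const]
  calc _ ≤ ∑ j ∈ univ.filter fun j => Fintype.card ι < #(X.filter fun p => p.2 j = c j p.1),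
          #(collisions X j) := sum_le_sum fun j hj => two_le_card_collisions (mem_filter.1 hj).2
    _ ≤ ∑ j, #(collisions X j) := sum_le_sum_of_subset (subset_univ _)

theorem sum_card_collisions_le {X : Finset (ι × (κ → β))} {D : ℝ} (hD : 0 ≤ D)
    (hagree : ∀ p ∈ X, ∀ q ∈ X, p.2 ≠ q.2 → ({j | p.2 j = q.2 j}.ncard : ℝ) ≤ D) :
    ((∑ j, #(collisions X j) : ℕ) : ℝ) ≤ #X.offDiag * D := by
  have hswap : ∑ j, #(collisions X j) =
      ∑ pq ∈ X.offDiag, #(univ.filter fun j => pq.1.2 ≠ pq.2.2 ∧ pq.1.2 j = pq.2.2 j) :=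
    (sum_card_bipartiteAbove_eq_sum_card_bipartiteBelow _).symm
  rw [hswap, Nat.cast_sum, ← nsmul_eq_mul, ← sum_const]
  refine sum_le_sum fun pq hpq => ?_
  obtain ⟨hp, hq, -⟩ := mem_offDiag.1 hpq
  by_cases hne : pq.1.2 = pq.2.2
  · simp [hne, hD]
  · refine le_trans ?_ (hagree _ hp _ hq hne)
    rw [Set.ncard_eq_toFinset_card', Set.toFinset_ofPred]
    simp [hne]

end Collisions

theorem Real.sqrt_lt_of_le_mul_sub_one {a x : ℝ} (ha : 0 < a) (hx : 0 ≤ x) (h : a ≤ x * (x - 1)) :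
    √a < x := by
  have hx : 0 < x := by nlinarith
  rw [Real.sqrt_lt' hx]
  nlinarith

theorem threshold_graph_soundness_general {σ : Type*} {k m : ℕ} (hm : 0 < m)
    {δ ε : ℝ} (hδ : δ ∈ Set.Ioo (0 : ℝ) 1) (hε : 0 < ε)
    (𝒞 : Finset (Fin m → σ))
    (hdist : ∀ x ∈ 𝒞, ∀ x' ∈ 𝒞, x ≠ x' →
      ({j : Fin m | x j = x' j}.ncard : ℝ) ≤ (1 - δ) * m)
    (X : Finset (Fin k × (Fin m → σ))) (hX : ∀ p ∈ X, p.2 ∈ 𝒞)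
    (b : Fin m → (Fin k → σ))
    (hthr : ε * m ≤
      (({j : Fin m |
        k + 1 ≤ {p : Fin k × (Fin m → σ) | p ∈ X ∧ p.2 j = b j p.1}.ncard}).ncard : ℝ)) :
    Real.sqrt (2 * ε / (1 - δ)) < (X.card : ℝ) := by
  classical
  have h1δ : 0 < 1 - δ := sub_pos.2 hδ.2
  have hm_pos : (0 : ℝ) < m := Nat.cast_pos.2 hm
  have hheavy : ε * m ≤
      #(univ.filter fun j => Fintype.card (Fin k) < #(X.filter fun p => p.2 j = b j p.1)) := by
    simpa [← Finset.coe_filter, Set.ncard_coe_finset, Set.ncard_eq_toFinset_card',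
      Set.toFinset_ofPred, Nat.succ_le_iff] using hthr
  have hcount : 2 * ε * m ≤ #X * (#X - 1) * ((1 - δ) * m) :=
    calc 2 * ε * m ≤ 2 * #(univ.filter fun j =>
            Fintype.card (Fin k) < #(X.filter fun p => p.2 j = b j p.1)) := by linarith
      _ ≤ ∑ j, #(collisions X j) := by
        exact_mod_cast two_mul_card_filter_lt_le_sum_card_collisions X b
      _ ≤ #X.offDiag * ((1 - δ) * m) :=
        sum_card_collisions_le (by positivity) fun p hp q hq => hdist _ (hX p hp) _ (hX q hq)
      _ = #X * (#X - 1) * ((1 - δ) * m) := by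
        rw [offDiag_card, Nat.cast_sub (Nat.le_mul_self _)]
        push_cast
        ring
  refine Real.sqrt_lt_of_le_mul_sub_one (by positivity) (Nat.cast_nonneg _) ?_
  rw [div_le_iff₀ h1δ]
  nlinarith

/-- Soundness of the threshold graph built from an error correcting code.
`𝒞` is a set of codewords in `Fin m → σ` with pairwise agreement at most `(1-δ)·m`.
Left vertices are pairs `(i, x) ∈ Fin k × 𝒞`, a right vertex of `B_j` is `(j, b)` with
`b : Fin k → σ`, and `(i,x)` is adjacent to `(j,b)` iff `x j = b i`. If `X` is a set of
left vertices and `b : Fin m → (Fin k → σ)` chooses one right vertex from each part, and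
for at least `ε·m` indices `j` the vertex `(j, b j)` has at least `k+1` neighbors in `X`,
then `|X| > √(2ε/(1-δ))`. -/
theorem threshold_graph_soundness {σ : Type*} {k m : ℕ} (hk : 0 < k) (hm : 0 < m)
    {δ ε : ℝ} (hδ : δ ∈ Set.Ioo (0 : ℝ) 1) (hε : 0 < ε)
    (𝒞 : Finset (Fin m → σ))
    (hdist : ∀ x ∈ 𝒞, ∀ x' ∈ 𝒞, x ≠ x' →
      ({j : Fin m | x j = x' j}.ncard : ℝ) ≤ (1 - δ) * m)
    (X : Finset (Fin k × (Fin m → σ))) (hX : ∀ p ∈ X, p.2 ∈ 𝒞)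
    (b : Fin m → (Fin k → σ))
    (hthr : ε * m ≤
      (({j : Fin m |
        k + 1 ≤ {p : Fin k × (Fin m → σ) | p ∈ X ∧ p.2 j = b j p.1}.ncard}).ncard : ℝ)) :
    Real.sqrt (2 * ε / (1 - δ)) < (X.card : ℝ) :=
  threshold_graph_soundness_general hm hδ hε 𝒞 hdist X hX b hthr
end

section
/- With the composed SetCover instance Γ' as in the context: suppose s₁, …, s_k ∈ S are such that {s₁, …, s_k} covers U in Γ (i.e. for every u ∈ U there is ℓ ∈ Fin k with (s_ℓ, u) ∈ E), let a_ℓ = (ℓ, s_ℓ) ∈ A_ℓ for each ℓ ∈ Fin k, and suppose b̂₁ ∈ B₁, …, b̂_m ∈ B_m are such that (a_ℓ, b̂_i) ∈ E_T for every i ∈ Fin m and every ℓ ∈ Fin k. Then the set {a₁, …, a_k} ∪ {b̂₁, …, b̂_m} ⊆ S' covers every element of U' in Γ'. (Under the weights w(a) = m/k for a ∈ A and w(b) = 1 for b ∈ B, this solution has total weight 2m.) -/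
/-- An element of the universe `U'` of the composed SetCover instance `Γ'`:
an index `i ∈ Fin m` together with `u⃗ : Fin c → U` and `b⃗ : Fin c → B₀`
(the vector `b⃗` taking values in the part `B_i = {i} × B₀`). -/
abbrev ComposedElt (U B₀ : Type*) (m c : ℕ) := Fin m × (Fin c → U) × (Fin c → B₀)

/-- A left vertex `a ∈ A = Fin k × S` covers `(i, u⃗, b⃗) ∈ U'` iff there is `j ∈ Fin c`
with `(a, (i, b⃗ j)) ∈ E_T` and `(s(a), u⃗ j) ∈ E`. -/
def coversA {S U B₀ : Type*} {k m c : ℕ}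
    (E : S → U → Prop) (E_T : Fin k × S → Fin m × B₀ → Prop)
    (a : Fin k × S) (elt : ComposedElt U B₀ m c) : Prop :=
  ∃ j : Fin c, E_T a (elt.1, elt.2.2 j) ∧ E a.2 (elt.2.1 j)

/-- A right vertex `b ∈ B = Fin m × B₀` covers `(i, u⃗, b⃗) ∈ U'` iff `b ∈ B_i`
and `b` differs from `(i, b⃗ j)` for every `j ∈ Fin c`. -/
def coversB {U B₀ : Type*} {m c : ℕ}
    (b : Fin m × B₀) (elt : ComposedElt U B₀ m c) : Prop :=
  b.1 = elt.1 ∧ ∀ j : Fin c, b.2 ≠ elt.2.2 j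

theorem coversB_or_exists_eq {U B₀ : Type*} {m c : ℕ} (b : B₀) (elt : ComposedElt U B₀ m c) :
    coversB (elt.1, b) elt ∨ ∃ j : Fin c, elt.2.2 j = b := by
  by_cases h : ∃ j : Fin c, elt.2.2 j = b
  · exact .inr h
  · exact .inl ⟨rfl, fun j hj => h ⟨j, hj.symm⟩⟩

theorem composed_completeness_general {S U B₀ : Type*} {k m c : ℕ}
    (E : S → U → Prop) (E_T : Fin k × S → Fin m × B₀ → Prop)
    (s : Fin k → S) (hcov : ∀ u : U, ∃ ℓ : Fin k, E (s ℓ) u)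
    (bhat : Fin m → B₀)
    (hbhat : ∀ (i : Fin m) (ℓ : Fin k), E_T (ℓ, s ℓ) (i, bhat i)) :
    ∀ elt : ComposedElt U B₀ m c,
      (∃ ℓ : Fin k, coversA E E_T (ℓ, s ℓ) elt) ∨
      (∃ i : Fin m, coversB (i, bhat i) elt) := by
  intro elt
  rcases coversB_or_exists_eq (bhat elt.1) elt with hB | ⟨j, hj⟩
  · exact .inr ⟨elt.1, hB⟩
  · -- `b̂_i` is some `b⃗ j`, so the `a_ℓ` covering `u⃗ j` in `Γ` is adjacent to `b⃗ j` in `T`.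
    obtain ⟨ℓ, hℓ⟩ := hcov (elt.2.1 j)
    exact .inl ⟨ℓ, j, hj ▸ hbhat elt.1 ℓ, hℓ⟩

/-- **completeness of the composition.** If `s₁, …, s_k` cover `U` in `Γ`,
`a_ℓ = (ℓ, s_ℓ)`, and `b̂_i ∈ B_i` is a common neighbor of all the `a_ℓ` in the threshold
graph for every `i`, then `{a₁,…,a_k} ∪ {b̂₁,…,b̂_m}` covers every element of `U'` in `Γ'`. -/
theorem composed_completeness {S U B₀ : Type*} [Fintype S] [Fintype U] [Fintype B₀]
    [Nonempty B₀] {k m c : ℕ} (hk : 0 < k) (hm : 0 < m) (hc : 0 < c)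
    (E : S → U → Prop) (E_T : Fin k × S → Fin m × B₀ → Prop)
    (s : Fin k → S) (hcov : ∀ u : U, ∃ ℓ : Fin k, E (s ℓ) u)
    (bhat : Fin m → B₀)
    (hbhat : ∀ (i : Fin m) (ℓ : Fin k), E_T (ℓ, s ℓ) (i, bhat i)) :
    ∀ elt : ComposedElt U B₀ m c,
      (∃ ℓ : Fin k, coversA E E_T (ℓ, s ℓ) elt) ∨
      (∃ i : Fin m, coversB (i, bhat i) elt) :=
  composed_completeness_general E E_T s hcov bhat hbhat
end

section
/- With the composed SetCover instance Γ' as in the context: suppose that no subset of S of size at most k covers U in Γ. Let X ⊆ A and Y ⊆ B be such that every element of U' is covered by some vertex of X ∪ Y in Γ'. Then for every i ∈ Fin m, at least one of the following holds: (1) |Y ∩ B_i| ≥ c + 1; or (2) there exists b ∈ B_i such that |{a ∈ X : (a, b) ∈ E_T}| ≥ k + 1. -/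
/-! If both alternatives fail for `i`, the at most `c` vertices of `Y ∩ B_i` can be listed as
the coordinates of a vector `b⃗ : Fin c → B₀`, and for each `j` the at most `k` neighbours of
`(i, b⃗ j)` in `X` project to at most `k` sets of `Γ`, which by hardness miss some `u⃗ j ∈ U`.
Then `(i, u⃗, b⃗)` is covered neither by `X` nor by `Y`. -/

open Finset

theorem Finset.exists_subset_range_fin_of_card_le {α : Type*} [Nonempty α] (s : Finset α)
    {c : ℕ} (hs : #s ≤ c) : ∃ f : Fin c → α, ↑s ⊆ Set.range f := by
  let g : s ↪ Fin c := s.equivFin.toEmbedding.trans (Fin.castLEEmb hs)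
  refine ⟨Function.extend g Subtype.val fun _ => Classical.arbitrary α, fun x hx => ?_⟩
  exact ⟨g ⟨x, hx⟩, g.injective.extend_apply _ _ _⟩

theorem exists_uncovered_of_card_le {ι S U : Type*} {k : ℕ} {E : S → U → Prop}
    (hard : ¬ ∃ C : Finset S, #C ≤ k ∧ ∀ u : U, ∃ s ∈ C, E s u)
    (σ : ι → S) {N : Finset ι} (hN : #N ≤ k) : ∃ u, ∀ a ∈ N, ¬ E (σ a) u := by
  classical
  by_contra! h
  refine hard ⟨N.image σ, card_image_le.trans hN, fun u => ?_⟩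
  obtain ⟨a, ha, hau⟩ := h u
  exact ⟨σ a, mem_image_of_mem σ ha, hau⟩

theorem composed_soundness_local_general {S U B₀ : Type*} [Nonempty B₀] {k m c : ℕ}
    (E : S → U → Prop) (E_T : Fin k × S → Fin m × B₀ → Prop)
    (hard : ¬ ∃ C : Finset S, C.card ≤ k ∧ ∀ u : U, ∃ s ∈ C, E s u)
    (X : Finset (Fin k × S)) (Y : Finset (Fin m × B₀))
    (hcov : ∀ elt : ComposedElt U B₀ m c,
      (∃ a ∈ X, coversA E E_T a elt) ∨ (∃ b ∈ Y, coversB b elt)) :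
    ∀ i : Fin m,
      c + 1 ≤ {b : Fin m × B₀ | b ∈ Y ∧ b.1 = i}.ncard ∨
      ∃ b₀ : B₀, k + 1 ≤ {a : Fin k × S | a ∈ X ∧ E_T a (i, b₀)}.ncard := by
  classical
  intro i
  by_contra! ⟨hY, hX⟩
  simp only [← coe_filter, Set.ncard_coe_finset, Nat.lt_succ_iff] at hY hX
  obtain ⟨b, hb⟩ := ((Y.filter (·.1 = i)).image Prod.snd).exists_subset_range_fin_of_card_le
    (card_image_le.trans hY)
  choose u hu using fun j => exists_uncovered_of_card_le hard Prod.snd (hX (b j))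
  rcases hcov (i, u, b) with ⟨a, haX, j, haT, haE⟩ | ⟨y, hyY, hyi, hyb⟩
  · exact hu j a (mem_filter.2 ⟨haX, haT⟩) haE
  · obtain ⟨j, hj⟩ := hb (mem_image_of_mem _ (mem_filter.2 ⟨hyY, hyi⟩))
    exact hyb j hj.symm

/-- **soundness of the composition, local form.** If no subset of `S` of
size at most `k` covers `U` in `Γ`, and `X ⊆ A`, `Y ⊆ B` together cover all of `U'` in
`Γ'`, then for every `i ∈ Fin m` either `Y` contains at least `c+1` vertices of `B_i`,
or some vertex `b ∈ B_i` has at least `k+1` neighbors in `X` in the threshold graph. -/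
theorem composed_soundness_local {S U B₀ : Type*} [Fintype S] [Fintype U] [Fintype B₀]
    [Nonempty B₀] {k m c : ℕ} (hk : 0 < k) (hm : 0 < m) (hc : 0 < c)
    (E : S → U → Prop) (E_T : Fin k × S → Fin m × B₀ → Prop)
    (hard : ¬ ∃ C : Finset S, C.card ≤ k ∧ ∀ u : U, ∃ s ∈ C, E s u)
    (X : Finset (Fin k × S)) (Y : Finset (Fin m × B₀))
    (hcov : ∀ elt : ComposedElt U B₀ m c,
      (∃ a ∈ X, coversA E E_T a elt) ∨ (∃ b ∈ Y, coversB b elt)) :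
    ∀ i : Fin m,
      c + 1 ≤ {b : Fin m × B₀ | b ∈ Y ∧ b.1 = i}.ncard ∨
      ∃ b₀ : B₀, k + 1 ≤ {a : Fin k × S | a ∈ X ∧ E_T a (i, b₀)}.ncard :=
  composed_soundness_local_general E E_T hard X Y hcov
end

section
/- With the graph G as in the context: if there exist s₁, …, s_k ∈ S such that {s₁, …, s_k} covers U (i.e. for every u ∈ U there is ℓ ∈ Fin k with (s_ℓ, u) ∈ E), then G contains a clique of size k + h. -/
/-- The graph `G` from the reduction of SetCover (with universe `U = Fin h × Fin L`) to
Clique. Vertices: `V = Fin k × S` and `W = Fin h × (Fin L → Fin k)`. Two `V`-vertices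
are adjacent iff their first components differ; two `W`-vertices are adjacent iff their
first components differ; `(i, s) ∈ V` and `(j, g) ∈ W` are adjacent iff for every
`ℓ ∈ Fin L`, `g ℓ = i` implies `(s, (j, ℓ)) ∈ E`. -/
def setCoverCliqueGraph {S : Type*} (k h L : ℕ) (E : S → Fin h × Fin L → Prop) :
    SimpleGraph ((Fin k × S) ⊕ (Fin h × (Fin L → Fin k))) where
  Adj v w :=
    match v, w with
    | Sum.inl (i, _), Sum.inl (i', _) => i ≠ i'
    | Sum.inr (j, _), Sum.inr (j', _) => j ≠ j'
    | Sum.inl (i, s), Sum.inr (j, g) => ∀ ℓ : Fin L, g ℓ = i → E s (j, ℓ)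
    | Sum.inr (j, g), Sum.inl (i, s) => ∀ ℓ : Fin L, g ℓ = i → E s (j, ℓ)
  symm := by
    constructor
    rintro (⟨i, s⟩ | ⟨j, g⟩) (⟨i', s'⟩ | ⟨j', g'⟩) hadj
    · exact fun hEq => hadj hEq.symm
    · exact hadj
    · exact hadj
    · exact fun hEq => hadj hEq.symm
  loopless := by
    constructor
    rintro (⟨i, s⟩ | ⟨j, g⟩) hadj
    · exact hadj rfl
    · exact hadj rfl

/-!
Choose for every element `u` of the universe an index `c u` with `s (c u)` covering `u`. The
`k` vertices `(i, s i)` and the `h` vertices `(j, c (j, ·))` are pairwise adjacent: within each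
side the first coordinates differ, and `c (j, ℓ) = i` says precisely that `s i` covers `(j, ℓ)`.
-/

namespace SimpleGraph

theorem exists_isNClique_of_top_hom {α β : Type*} [Fintype β] {G : SimpleGraph α}
    (f : (⊤ : SimpleGraph β) →g G) : ∃ t : Finset α, G.IsNClique (Fintype.card β) t :=
  ⟨_, isNClique_map_copy_top (f.toCopy f.injective_of_top_hom)⟩

end SimpleGraph

def setCoverCliqueGraph.coverHom {S : Type*} {k h L : ℕ} {E : S → Fin h × Fin L → Prop}
    (s : Fin k → S) (c : Fin h × Fin L → Fin k) (hc : ∀ u, E (s (c u)) u) :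
    (⊤ : SimpleGraph (Fin k ⊕ Fin h)) →g setCoverCliqueGraph k h L E where
  toFun := Sum.map (fun i => (i, s i)) (fun j => (j, Function.curry c j))
  map_rel' := by
    rintro (i | j) (i' | j') hne
    · exact fun hi => hne (congrArg Sum.inl hi)
    · rintro ℓ rfl
      exact hc (j', ℓ)
    · rintro ℓ rfl
      exact hc (j, ℓ)
    · exact fun hj => hne (congrArg Sum.inr hj)

theorem setCoverCliqueGraph_completeness_general {S : Type*}
    {k h L : ℕ}
    (E : S → Fin h × Fin L → Prop)
    (s : Fin k → S) (hcov : ∀ u : Fin h × Fin L, ∃ ℓ : Fin k, E (s ℓ) u) :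
    ∃ t : Finset ((Fin k × S) ⊕ (Fin h × (Fin L → Fin k))),
      (setCoverCliqueGraph k h L E).IsNClique (k + h) t := by
  choose c hc using hcov
  simpa using SimpleGraph.exists_isNClique_of_top_hom (setCoverCliqueGraph.coverHom s c hc)

/-- If `s₁, …, s_k ∈ S` cover the universe `U = Fin h × Fin L`, then the
graph `G` contains a clique of size `k + h`. -/
theorem setCoverCliqueGraph_completeness {S : Type*} [Fintype S]
    {k h L : ℕ} (hk : 0 < k) (hh : 0 < h) (hL : 0 < L)
    (E : S → Fin h × Fin L → Prop)
    (s : Fin k → S) (hcov : ∀ u : Fin h × Fin L, ∃ ℓ : Fin k, E (s ℓ) u) :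
    ∃ t : Finset ((Fin k × S) ⊕ (Fin h × (Fin L → Fin k))),
      (setCoverCliqueGraph k h L E).IsNClique (k + h) t :=
  setCoverCliqueGraph_completeness_general E s hcov
end

section
/- With the graph G as in the context: if G contains a clique of size k + h, then there exists a function v : Fin k → S such that the set {v(1), …, v(k)} covers U, i.e. for every u ∈ U there is i ∈ Fin k with (v(i), u) ∈ E; in particular U has a cover of size at most k. -/
namespace setCoverCliqueGraph

open SimpleGraph

variable {S : Type*} {k h L : ℕ} {E : S → Fin h × Fin L → Prop}

def coloring : (setCoverCliqueGraph k h L E).Coloring (Fin k ⊕ Fin h) :=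
  Coloring.mk (Sum.map Prod.fst Prod.fst) fun {v w} hadj => by
    rcases v with ⟨i, s⟩ | ⟨j, g⟩ <;> rcases w with ⟨i', s'⟩ | ⟨j', g'⟩ <;>
      simp_all [setCoverCliqueGraph]

theorem exists_mem_of_isNClique {t : Finset ((Fin k × S) ⊕ (Fin h × (Fin L → Fin k)))}
    (ht : (setCoverCliqueGraph k h L E).IsNClique (k + h) t) (c : Fin k ⊕ Fin h) :
    ∃ x ∈ t, Sum.map Prod.fst Prod.fst x = c :=
  coloring.surjOn_of_card_le_isClique ht.isClique (by simp [ht.card_eq]) (Set.mem_univ c)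

theorem exists_inl_mem_of_isNClique {t : Finset ((Fin k × S) ⊕ (Fin h × (Fin L → Fin k)))}
    (ht : (setCoverCliqueGraph k h L E).IsNClique (k + h) t) (i : Fin k) :
    ∃ s, Sum.inl (i, s) ∈ t := by
  obtain ⟨⟨i', s⟩ | ⟨j, g⟩, hx, hc⟩ := exists_mem_of_isNClique ht (Sum.inl i)
  · obtain rfl : i' = i := Sum.inl.inj hc
    exact ⟨s, hx⟩
  · cases hc

theorem exists_inr_mem_of_isNClique {t : Finset ((Fin k × S) ⊕ (Fin h × (Fin L → Fin k)))}
    (ht : (setCoverCliqueGraph k h L E).IsNClique (k + h) t) (j : Fin h) :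
    ∃ g, Sum.inr (j, g) ∈ t := by
  obtain ⟨⟨i, s⟩ | ⟨j', g⟩, hx, hc⟩ := exists_mem_of_isNClique ht (Sum.inr j)
  · cases hc
  · obtain rfl : j' = j := Sum.inr.inj hc
    exact ⟨g, hx⟩

theorem exists_cover_of_isNClique {t : Finset ((Fin k × S) ⊕ (Fin h × (Fin L → Fin k)))}
    (ht : (setCoverCliqueGraph k h L E).IsNClique (k + h) t) :
    ∃ v : Fin k → S, ∀ u : Fin h × Fin L, ∃ i : Fin k, E (v i) u := by
  choose v hv using exists_inl_mem_of_isNClique ht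
  choose w hw using exists_inr_mem_of_isNClique ht
  refine ⟨v, fun ⟨j, ℓ⟩ => ⟨w j ℓ, ?_⟩⟩
  have hadj : (setCoverCliqueGraph k h L E).Adj (Sum.inl (w j ℓ, v (w j ℓ))) (Sum.inr (j, w j)) :=
    ht.isClique (hv _) (hw j) Sum.inl_ne_inr
  exact hadj ℓ rfl

end setCoverCliqueGraph

theorem exists_finset_card_le_of_forall_exists {ι S U : Type*} [Fintype ι] {E : S → U → Prop}
    (v : ι → S) (hv : ∀ u, ∃ i, E (v i) u) :
    ∃ C : Finset S, C.card ≤ Fintype.card ι ∧ ∀ u, ∃ s ∈ C, E s u := by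
  classical
  refine ⟨Finset.univ.image v, Finset.card_image_le, fun u => ?_⟩
  obtain ⟨i, hi⟩ := hv u
  exact ⟨v i, Finset.mem_image_of_mem v (Finset.mem_univ i), hi⟩

theorem setCoverCliqueGraph_soundness_general {S : Type*}
    {k h L : ℕ}
    (E : S → Fin h × Fin L → Prop)
    (t : Finset ((Fin k × S) ⊕ (Fin h × (Fin L → Fin k))))
    (ht : (setCoverCliqueGraph k h L E).IsNClique (k + h) t) :
    (∃ v : Fin k → S, ∀ u : Fin h × Fin L, ∃ i : Fin k, E (v i) u) ∧
    (∃ C : Finset S, C.card ≤ k ∧ ∀ u : Fin h × Fin L, ∃ s ∈ C, E s u) := by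
  obtain ⟨v, hv⟩ := setCoverCliqueGraph.exists_cover_of_isNClique ht
  obtain ⟨C, hC, hcover⟩ := exists_finset_card_le_of_forall_exists v hv
  exact ⟨⟨v, hv⟩, C, by simpa using hC, hcover⟩

/-- If the graph `G` contains a clique of size `k + h`, then there is a
function `v : Fin k → S` whose values cover the universe `U = Fin h × Fin L`; in
particular `U` has a cover of size at most `k`. -/
theorem setCoverCliqueGraph_soundness {S : Type*} [Fintype S]
    {k h L : ℕ} (hk : 0 < k) (hh : 0 < h) (hL : 0 < L)
    (E : S → Fin h × Fin L → Prop)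
    (t : Finset ((Fin k × S) ⊕ (Fin h × (Fin L → Fin k))))
    (ht : (setCoverCliqueGraph k h L E).IsNClique (k + h) t) :
    (∃ v : Fin k → S, ∀ u : Fin h × Fin L, ∃ i : Fin k, E (v i) u) ∧
    (∃ C : Finset S, C.card ≤ k ∧ ∀ u : Fin h × Fin L, ∃ s ∈ C, E s u) :=
  setCoverCliqueGraph_soundness_general E t ht
end

section
/- Let W be a finite set, let k be a positive integer, let S₁, …, S_k be finite sets with W ⊆ S₁ ∪ … ∪ S_k, and let T be a natural number with T ≤ k. Then there exists a subset J ⊆ Fin k with |J| = k − T such that the number of elements of W not covered by ⋃_{i ∈ J} S_i is at most (T/k)·|W|, i.e. |W \ ⋃_{i ∈ J} S_i| ≤ (T/k)·|W|. -/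
/-!
Assign every element of `W` to one set containing it; this splits `W` into `k` disjoint
fibres. Discarding the `T` sets with the smallest fibres leaves uncovered only elements of
those fibres, and the `T` smallest of `k` numbers sum to at most a `T/k`-fraction of the total.
-/

open Finset

namespace Finset

variable {ι M : Type*}

theorem exists_subset_card_eq_card_nsmul_sum_le [AddCommMonoid M] [LinearOrder M]
    [IsOrderedAddMonoid M] (f : ι → M) (s : Finset ι) {t : ℕ} (ht : t ≤ #s) :
    ∃ u ⊆ s, #u = t ∧ #s • ∑ i ∈ u, f i ≤ t • ∑ i ∈ s, f i := by
  classical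
  induction s using Finset.strongInduction with
  | H s ih =>
    rcases ht.eq_or_lt with rfl | hlt
    · exact ⟨s, Subset.rfl, rfl, le_rfl⟩
    -- Drop a largest value `f m`: each of the `t` values kept is at most `f m`.
    obtain ⟨m, hm, hmax⟩ := s.exists_max_image f (card_pos.mp (t.zero_le.trans_lt hlt))
    have hcard : #(s.erase m) + 1 = #s := card_erase_add_one hm
    obtain ⟨u, hus, hu, hsum⟩ := ih (s.erase m) (erase_ssubset hm) (by omega)
    refine ⟨u, hus.trans (erase_subset m s), hu, ?_⟩
    have hu_le : ∑ i ∈ u, f i ≤ t • f m :=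
      hu ▸ sum_le_card_nsmul u f (f m) fun i hi => hmax i (mem_of_mem_erase (hus hi))
    calc #s • ∑ i ∈ u, f i = #(s.erase m) • ∑ i ∈ u, f i + ∑ i ∈ u, f i := by
          rw [← hcard, succ_nsmul]
      _ ≤ t • ∑ i ∈ s.erase m, f i + t • f m := add_le_add hsum hu_le
      _ = t • ∑ i ∈ s, f i := by rw [← nsmul_add, sum_erase_add s f hm]

theorem card_sdiff_biUnion_le_card_filter_notMem [DecidableEq ι] {α : Type*} [DecidableEq α]
    {W : Finset α} {S : ι → Finset α} {g : α → ι} (hg : ∀ w ∈ W, w ∈ S (g w))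
    (J : Finset ι) : #(W \ J.biUnion S) ≤ #{w ∈ W | g w ∉ J} := by
  refine card_le_card fun w hw => ?_
  rw [mem_sdiff] at hw
  exact mem_filter.mpr ⟨hw.1, fun hJ => hw.2 (mem_biUnion.mpr ⟨g w, hJ, hg w hw.1⟩)⟩

end Finset

/-- **per-round averaging step of the modified greedy algorithm.**
If the finite set `W` is covered by the sets `S₁, …, S_k` and `T ≤ k`, then some
`k - T` of the sets leave at most a `T/k`-fraction of `W` uncovered. -/
theorem greedy_round {α : Type*} [DecidableEq α] (W : Finset α)
    {k : ℕ} (hk : 0 < k) (S : Fin k → Finset α)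
    (hcov : ∀ w ∈ W, ∃ i : Fin k, w ∈ S i)
    (T : ℕ) (hT : T ≤ k) :
    ∃ J : Finset (Fin k), J.card = k - T ∧
      ((W \ J.biUnion S).card : ℝ) ≤ (T : ℝ) / (k : ℝ) * (W.card : ℝ) := by
  have hcov' : ∀ w, ∃ i : Fin k, w ∈ W → w ∈ S i := fun w => by
    by_cases hw : w ∈ W
    · exact (hcov w hw).imp fun _ hi _ => hi
    · exact ⟨⟨0, hk⟩, fun h => absurd h hw⟩
  choose g hg using hcov'
  set fibre : Fin k → ℕ := fun i => #{w ∈ W | g w = i}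
  obtain ⟨U, -, hU, hUsum⟩ :=
    exists_subset_card_eq_card_nsmul_sum_le fibre univ (t := T) (by simpa using hT)
  refine ⟨univ \ U, by rw [card_univ_sdiff, hU, Fintype.card_fin], ?_⟩
  have huncov : #(W \ (univ \ U).biUnion S) ≤ ∑ i ∈ U, fibre i := by
    rw [sum_card_fiberwise_eq_card_filter]
    simpa using card_sdiff_biUnion_le_card_filter_notMem hg (univ \ U)
  have htotal : ∑ i, fibre i = #W := (card_eq_sum_card_fiberwise fun w _ => mem_univ (g w)).symm
  rw [card_univ, Fintype.card_fin, htotal, smul_eq_mul, smul_eq_mul] at hUsum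
  rw [div_mul_eq_mul_div, le_div_iff₀ (by exact_mod_cast hk), mul_comm]
  exact_mod_cast (Nat.mul_le_mul_left k huncov).trans hUsum
end

section
/- Let U be a finite set and let 𝒮 be a family of subsets of U. Suppose there exist k sets in 𝒮 whose union is U, and let T be an integer with 1 ≤ T < k. Then for every natural number r there exists a subfamily 𝒮' ⊆ 𝒮 with |𝒮'| ≤ r·(k − T) such that the number of elements of U not covered by ⋃ 𝒮' is at most (T/k)^r · |U|. -/
/-!
If `W` is covered by a family `𝒯` of `m` sets, then averaging shows that
some member of `𝒯` covers at least `#W / m` elements of `W`; the rest of `W` is covered by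
the other `m - 1` members. Taking such sets `m - n` times leaves at most
`(m - 1)/m · (m - 2)/(m - 1) ⋯ n/(n + 1) = n/m` of `W` uncovered. Applied with the
`k`-set cover of `U`, each round of `k - T` sets therefore shrinks the uncovered part of `U`
by a factor `T/k`.
-/

open Finset

section

variable {α : Type*} [DecidableEq α]

theorem Finset.exists_mem_card_le_card_mul_card_inter {𝒯 : Finset (Finset α)} {W : Finset α}
    (hW : W ⊆ 𝒯.biUnion id) (h𝒯 : 𝒯.Nonempty) :
    ∃ t ∈ 𝒯, #W ≤ #𝒯 * #(W ∩ t) := by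
  have hsum : #W ≤ ∑ t ∈ 𝒯, #(W ∩ t) :=
    calc #W = #(W ∩ 𝒯.biUnion id) := by rw [inter_eq_left.mpr hW]
      _ ≤ ∑ t ∈ 𝒯, #(W ∩ t) := by rw [inter_biUnion]; exact card_biUnion_le
  refine exists_le_of_sum_le h𝒯 ?_
  rw [sum_const, smul_eq_mul, ← mul_sum]
  exact Nat.mul_le_mul_left _ hsum

theorem Finset.sdiff_subset_biUnion_erase {ι : Type*} [DecidableEq ι] {s : Finset ι}
    {f : ι → Finset α} {W : Finset α} {i : ι} (hW : W ⊆ s.biUnion f) :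
    W \ f i ⊆ (s.erase i).biUnion f := by
  intro w hw
  obtain ⟨hwW, hwi⟩ := mem_sdiff.mp hw
  obtain ⟨j, hj, hwj⟩ := mem_biUnion.mp (hW hwW)
  exact mem_biUnion.mpr ⟨j, mem_erase.mpr ⟨by rintro rfl; exact hwi hwj, hj⟩, hwj⟩

theorem Finset.exists_subset_card_mul_card_sdiff_biUnion_le {𝒯 : Finset (Finset α)}
    {W : Finset α} {n : ℕ} (hn : n ≤ #𝒯) (hW : W ⊆ 𝒯.biUnion id) :
    ∃ 𝒜 ⊆ 𝒯, #𝒜 + n ≤ #𝒯 ∧ #𝒯 * #(W \ 𝒜.biUnion id) ≤ n * #W := by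
  obtain ⟨d, hd⟩ := Nat.exists_eq_add_of_le hn
  clear hn
  induction d generalizing 𝒯 W with
  | zero => exact ⟨∅, empty_subset _, by simp [hd], by simp [hd]⟩
  | succ d ih =>
    obtain ⟨t, ht, hgreedy⟩ :=
      exists_mem_card_le_card_mul_card_inter hW (card_pos.mp (by omega))
    have herase : #(𝒯.erase t) = n + d := by rw [card_erase_of_mem ht]; omega
    have hrest : W \ t ⊆ (𝒯.erase t).biUnion id := sdiff_subset_biUnion_erase hW
    obtain ⟨𝒜, h𝒜𝒯, h𝒜card, h𝒜⟩ := ih hrest herase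
    refine ⟨insert t 𝒜, insert_subset ht (h𝒜𝒯.trans (erase_subset _ _)), ?_, ?_⟩
    · have := card_insert_le t 𝒜
      omega
    · rw [biUnion_insert, id, ← sup_eq_union, ← sdiff_sdiff_left, hd,
        ← card_inter_add_card_sdiff W t]
      rw [hd, ← card_inter_add_card_sdiff W t] at hgreedy
      rw [herase] at h𝒜
      have hXY : #((W \ t) \ 𝒜.biUnion id) ≤ #(W \ t) := card_le_card sdiff_subset
      set a := #(W ∩ t)
      set Y := #(W \ t)
      set X := #((W \ t) \ 𝒜.biUnion id)
      -- `(n + d) X ≤ n Y ≤ n (n + d) a`, and `Y = 0` when `n + d = 0`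
      have hXa : X ≤ n * a := by
        rcases Nat.eq_zero_or_pos (n + d) with hp | hp
        · obtain rfl : n = 0 := by omega
          nlinarith
        · exact Nat.le_of_mul_le_mul_left (by nlinarith) hp
      nlinarith

end

theorem greedy_iterated_general {α : Type*} [DecidableEq α] (U : Finset α)
    (𝒮 : Finset (Finset α))
    {k : ℕ} (hcov : ∃ 𝒯 ⊆ 𝒮, 𝒯.card = k ∧ 𝒯.biUnion id = U)
    {T : ℕ} (hTk : T < k) :
    ∀ r : ℕ, ∃ 𝒮' ⊆ 𝒮, 𝒮'.card ≤ r * (k - T) ∧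
      ((U \ 𝒮'.biUnion id).card : ℝ) ≤ ((T : ℝ) / (k : ℝ)) ^ r * (U.card : ℝ) := by
  obtain ⟨𝒯, h𝒯𝒮, rfl, h𝒯U⟩ := hcov
  intro r
  induction r with
  | zero => exact ⟨∅, empty_subset _, by simp, by simp⟩
  | succ r ih =>
    obtain ⟨𝒮', h𝒮'𝒮, h𝒮'card, h𝒮'⟩ := ih
    have hW : U \ 𝒮'.biUnion id ⊆ 𝒯.biUnion id := h𝒯U ▸ sdiff_subset
    obtain ⟨𝒜, h𝒜𝒯, h𝒜card, h𝒜⟩ := exists_subset_card_mul_card_sdiff_biUnion_le hTk.le hW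
    refine ⟨𝒮' ∪ 𝒜, union_subset h𝒮'𝒮 (h𝒜𝒯.trans h𝒯𝒮), ?_, ?_⟩
    · have := card_union_le 𝒮' 𝒜
      rw [add_mul, one_mul]
      omega
    · have h𝒯 : (0 : ℝ) < #𝒯 := by exact_mod_cast (Nat.zero_le T).trans_lt hTk
      have hround : (#((U \ 𝒮'.biUnion id) \ 𝒜.biUnion id) : ℝ)
          ≤ T / #𝒯 * #(U \ 𝒮'.biUnion id) := by
        rw [div_mul_eq_mul_div, le_div_iff₀ h𝒯, mul_comm]
        exact_mod_cast h𝒜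
      rw [union_biUnion, ← sup_eq_union, ← sdiff_sdiff_left, pow_succ', mul_assoc]
      exact hround.trans (mul_le_mul_of_nonneg_left h𝒮' (by positivity))

/-- **iterated greedy guarantee.** Let `𝒮` be a family of subsets of a
finite set `U` containing `k` sets whose union is `U`, and let `1 ≤ T < k`. Then for
every `r` there is a subfamily `𝒮' ⊆ 𝒮` of at most `r·(k - T)` sets leaving at most a
`(T/k)^r`-fraction of `U` uncovered. -/
theorem greedy_iterated {α : Type*} [DecidableEq α] (U : Finset α)
    (𝒮 : Finset (Finset α)) (h𝒮 : ∀ s ∈ 𝒮, s ⊆ U)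
    {k : ℕ} (hcov : ∃ 𝒯 ⊆ 𝒮, 𝒯.card = k ∧ 𝒯.biUnion id = U)
    {T : ℕ} (hT1 : 1 ≤ T) (hTk : T < k) :
    ∀ r : ℕ, ∃ 𝒮' ⊆ 𝒮, 𝒮'.card ≤ r * (k - T) ∧
      ((U \ 𝒮'.biUnion id).card : ℝ) ≤ ((T : ℝ) / (k : ℝ)) ^ r * (U.card : ℝ) :=
  greedy_iterated_general U 𝒮 hcov hTk
end
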